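/- arXiv:2205.13285 — 8 statements merged into one kernel-verified Lean document; each statement's English description precedes it below -/
import Mathlib

section
/- The set {3, 4} is a connected component of the Babylonian graph B: the only positive integer b with b ≠ 3 such that 9 + b^2 is a perfect square is b = 4, and the only positive integer b with b ≠ 4 such that 16 + b^2 is a perfect square is b = 3. -/
/-- The set `{3, 4}` is a connected component of the Babylonian graph:
the only positive integer `b ≠ 3` with `9 + b^2` a perfect square is `b = 4`,
and the only positive integer `b ≠ 4` with `16 + b^2` a perfect square is `b = 3`. -/
theorem babylon_component_three_four :
    (∀ b : ℕ, 0 < b → b ≠ 3 → ((∃ k : ℕ, 9 + b ^ 2 = k ^ 2) ↔ b = 4)) ∧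
    (∀ b : ℕ, 0 < b → b ≠ 4 → ((∃ k : ℕ, 16 + b ^ 2 = k ^ 2) ↔ b = 3)) := by
  constructor
  · intro b hb hne
    constructor
    · rintro ⟨k, hk⟩
      have h1 : b < k := by nlinarith
      have h2 : k ≤ b + 9 := by nlinarith
      obtain ⟨d, hd, hd1, hd9⟩ : ∃ d, k = b + d ∧ 1 ≤ d ∧ d ≤ 9 := ⟨k - b, by omega, by omega, by omega⟩
      subst hd
      have h3 : 9 = 2 * b * d + d ^ 2 := by nlinarith
      interval_cases d <;> omega
    · rintro rfl; exact ⟨5, by norm_num⟩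
  · intro b hb hne
    constructor
    · rintro ⟨k, hk⟩
      have h1 : b < k := by nlinarith
      have h2 : k ≤ b + 16 := by nlinarith
      obtain ⟨d, hd, hd1, hd9⟩ : ∃ d, k = b + d ∧ 1 ≤ d ∧ d ≤ 16 := ⟨k - b, by omega, by omega, by omega⟩
      subst hd
      have h3 : 16 = 2 * b * d + d ^ 2 := by nlinarith
      interval_cases d <;> omega
    · rintro rfl; exact ⟨5, by norm_num⟩
end

section
/- The connected component of the vertex 5 in the Babylonian graph B is infinite; equivalently, there exists a strictly increasing sequence of positive integers x_0 = 5, x_1, x_2, ... such that x_k^2 + x_{k+1}^2 is a perfect square for every k ≥ 0. In particular the Babylonian graph B has infinite diameter. -/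
/-- One step in the Babylonian graph: from any `n ≥ 5` we can move to a larger
neighbour. -/
def bab (n : ℕ) : ℕ := if n % 2 = 0 then (n / 2) ^ 2 - 1 else (n ^ 2 - 1) / 2

lemma bab_step (n : ℕ) (h : 5 ≤ n) :
    n < bab n ∧ ∃ c : ℕ, n ^ 2 + (bab n) ^ 2 = c ^ 2 := by
  unfold bab
  rcases Nat.even_or_odd n with he | ho
  · obtain ⟨m, hm⟩ := he
    have hm3 : 3 ≤ m := by omega
    have hmod : n % 2 = 0 := by omega
    have hdiv : n / 2 = m := by omega
    rw [if_pos hmod, hdiv]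
    have hm2 : 1 ≤ m ^ 2 := Nat.one_le_pow _ _ (by omega)
    obtain ⟨t, ht⟩ : ∃ t, m ^ 2 = t + 1 := ⟨m ^ 2 - 1, by omega⟩
    have htval : m ^ 2 - 1 = t := by omega
    rw [htval]
    constructor
    · nlinarith
    · refine ⟨t + 2, ?_⟩
      have hn2 : n ^ 2 = 4 * t + 4 := by
        have : n ^ 2 = 4 * m ^ 2 := by rw [hm]; ring
        omega
      rw [hn2]; ring
  · obtain ⟨j, hj⟩ := ho
    have hj2 : 2 ≤ j := by omega
    have hmod : ¬ n % 2 = 0 := by omega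
    rw [if_neg hmod]
    have hn2 : n ^ 2 = 4 * j ^ 2 + 4 * j + 1 := by rw [hj]; ring
    have hval : (n ^ 2 - 1) / 2 = 2 * j ^ 2 + 2 * j := by omega
    rw [hval]
    constructor
    · nlinarith
    · refine ⟨2 * j ^ 2 + 2 * j + 1, ?_⟩
      rw [hn2]; ring

/-- The connected component of the vertex `5` in the Babylonian graph is infinite:
there is a strictly increasing sequence of positive integers starting at `5` such
that consecutive terms form Pythagorean pairs.  In particular the Babylonian
graph has infinite diameter. -/
theorem babylon_component_five_infinite :
    ∃ x : ℕ → ℕ, x 0 = 5 ∧ StrictMono x ∧ (∀ k : ℕ, 0 < x k) ∧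
      ∀ k : ℕ, ∃ c : ℕ, (x k) ^ 2 + (x (k + 1)) ^ 2 = c ^ 2 := by
  refine ⟨fun k => bab^[k] 5, rfl, ?_, ?_, ?_⟩
  all_goals
    have h5 : ∀ k : ℕ, 5 ≤ bab^[k] 5 := by
      intro k
      induction k with
      | zero => simp
      | succ k ih =>
        rw [Function.iterate_succ_apply']
        exact le_of_lt (lt_of_le_of_lt ih (bab_step _ ih).1)
  · apply strictMono_nat_of_lt_succ
    intro k
    rw [Function.iterate_succ_apply']
    exact (bab_step _ (h5 k)).1
  · intro k; exact lt_of_lt_of_le (by norm_num) (h5 k)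
  · intro k
    show ∃ c : ℕ, (bab^[k] 5) ^ 2 + (bab^[k + 1] 5) ^ 2 = c ^ 2
    rw [Function.iterate_succ_apply']
    exact (bab_step _ (h5 k)).2
end

section
/- Every odd prime p is a leaf of the Babylonian graph B: there is exactly one positive integer b with b ≠ p such that p^2 + b^2 is a perfect square, namely b = (p^2 - 1)/2. -/
/-- Every odd prime `p` is a leaf of the Babylonian graph: there is exactly one
positive integer `b ≠ p` with `p^2 + b^2` a perfect square, namely
`b = (p^2 - 1)/2`. -/
theorem babylon_odd_prime_leaf (p : ℕ) (hp : p.Prime) (hodd : Odd p) :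
    ∀ b : ℕ, 0 < b → b ≠ p →
      ((∃ k : ℕ, p ^ 2 + b ^ 2 = k ^ 2) ↔ b = (p ^ 2 - 1) / 2) := by
  intro b hb hbp
  obtain ⟨m, hm⟩ : Odd (p ^ 2) := hodd.pow
  have hp2 : 2 ≤ p := hp.two_le
  constructor
  · rintro ⟨k, hk⟩
    have hbk : b < k := by
      have h1 : b ^ 2 < k ^ 2 := by nlinarith
      exact lt_of_pow_lt_pow_left₀ 2 (Nat.zero_le k) h1
    obtain ⟨d, hd⟩ : ∃ d, k = b + d ∧ 0 < d := ⟨k - b, by omega, by omega⟩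
    obtain ⟨hkd, hdpos⟩ := hd
    subst hkd
    have key : p ^ 2 = d * (d + 2 * b) := by nlinarith
    have hdvd : d ∣ p ^ 2 := ⟨d + 2 * b, key⟩
    obtain ⟨i, hi, rfl⟩ := (Nat.dvd_prime_pow hp).mp hdvd
    interval_cases i
    · simp at key; omega
    · rw [pow_one] at key
      have : p * p = p * (p + 2 * b) := by nlinarith
      have := Nat.eq_of_mul_eq_mul_left hp.pos this
      omega
    · nlinarith
  · rintro rfl
    refine ⟨m + 1, ?_⟩
    have hb' : (p ^ 2 - 1) / 2 = m := by omega
    rw [hb']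
    nlinarith
end

section
/- There is no triangle in the Babylonian graph all of whose edges are primitive: there are no positive integers a, b, c such that each of the pairs (a,b), (a,c), (b,c) is coprime and has a sum of squares that is a perfect square. In other words, in an Euler brick it is impossible that all three face-diagonal Pythagorean pairs are primitive. -/
lemma odd_odd_not_sq (a b k : ℕ) (ha : a % 2 = 1) (hb : b % 2 = 1) :
    a ^ 2 + b ^ 2 ≠ k ^ 2 := by
  intro h
  have h1 : a ^ 2 % 4 = 1 := by
    rw [Nat.pow_mod]
    have : a % 4 = 1 ∨ a % 4 = 3 := by omega
    rcases this with h|h <;> simp [h]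
  have h2 : b ^ 2 % 4 = 1 := by
    rw [Nat.pow_mod]
    have : b % 4 = 1 ∨ b % 4 = 3 := by omega
    rcases this with h|h <;> simp [h]
  have h3 : k ^ 2 % 4 = 0 ∨ k ^ 2 % 4 = 1 := by
    rw [Nat.pow_mod]
    have : k % 4 = 0 ∨ k % 4 = 1 ∨ k % 4 = 2 ∨ k % 4 = 3 := by omega
    rcases this with h|h|h|h <;> simp [h]
  omega

lemma pair_parity (a b : ℕ) (hg : Nat.gcd a b = 1)
    (hs : ∃ k : ℕ, a ^ 2 + b ^ 2 = k ^ 2) : a % 2 ≠ b % 2 := by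
  intro hp
  rcases Nat.even_or_odd a with he | ho
  · have hae := Nat.even_iff.mp he
    have : 2 ∣ Nat.gcd a b :=
      Nat.dvd_gcd (Nat.dvd_of_mod_eq_zero hae)
        (Nat.dvd_of_mod_eq_zero (by omega))
    omega
  · have hao := Nat.odd_iff.mp ho
    obtain ⟨k, hk⟩ := hs
    exact odd_odd_not_sq a b k hao (by omega) hk

/-- There is no triangle in the Babylonian graph all of whose edges are
primitive: there are no positive integers `a, b, c` such that each of the pairs
`(a,b)`, `(a,c)`, `(b,c)` is coprime and has a sum of squares that is a
perfect square. -/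
theorem no_primitive_triangle :
    ¬ ∃ a b c : ℕ, 0 < a ∧ 0 < b ∧ 0 < c ∧
      (Nat.gcd a b = 1 ∧ ∃ k : ℕ, a ^ 2 + b ^ 2 = k ^ 2) ∧
      (Nat.gcd a c = 1 ∧ ∃ k : ℕ, a ^ 2 + c ^ 2 = k ^ 2) ∧
      (Nat.gcd b c = 1 ∧ ∃ k : ℕ, b ^ 2 + c ^ 2 = k ^ 2) := by
  rintro ⟨a, b, c, -, -, -, ⟨hab, sab⟩, ⟨hac, sac⟩, ⟨hbc, sbc⟩⟩
  have h1 := pair_parity a b hab sab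
  have h2 := pair_parity a c hac sac
  have h3 := pair_parity b c hbc sbc
  omega
end

section
/- The Saunderson parametrization produces Euler bricks: if u, v, w are positive integers with u^2 + v^2 = w^2, then for a = u·(4v^2 - w^2), b = v·(4u^2 - w^2), c = 4uvw, each of the quantities a^2 + b^2, a^2 + c^2 and b^2 + c^2 is a perfect square (of an integer). -/
/-- The Saunderson parametrization produces Euler bricks: if `u, v, w` are
positive integers with `u^2 + v^2 = w^2`, then for `a = u(4v^2 - w^2)`,
`b = v(4u^2 - w^2)`, `c = 4uvw`, each of `a^2 + b^2`, `a^2 + c^2`, `b^2 + c^2`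
is the square of an integer. -/
theorem saunderson_euler_brick (u v w : ℤ) (hu : 0 < u) (hv : 0 < v) (hw : 0 < w)
    (h : u ^ 2 + v ^ 2 = w ^ 2) :
    let a := u * (4 * v ^ 2 - w ^ 2)
    let b := v * (4 * u ^ 2 - w ^ 2)
    let c := 4 * u * v * w
    (∃ k : ℤ, a ^ 2 + b ^ 2 = k ^ 2) ∧
    (∃ k : ℤ, a ^ 2 + c ^ 2 = k ^ 2) ∧
    (∃ k : ℤ, b ^ 2 + c ^ 2 = k ^ 2) := by
  refine ⟨⟨w ^ 3, ?_⟩, ⟨u * (4 * v ^ 2 + w ^ 2), ?_⟩, ⟨v * (4 * u ^ 2 + w ^ 2), ?_⟩⟩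
  · linear_combination (16 * u ^ 2 * v ^ 2 + w ^ 4) * h
  · ring
  · ring
end

section
/- (Pocklington's lemma) If x and y are nonzero integers, then x^4 + 18 x^2 y^2 + y^4 is not a perfect square; i.e., the Diophantine equation x^4 + 18 x^2 y^2 + y^4 = z^2 has no integer solutions with xy ≠ 0. -/
/-!
Infinite descent on `|z|`. After dividing by `gcd x y`, one of `x, y` is odd and the other even:
if both are odd the left side is `20` mod `32`, which is not a square. With `x` odd,
`(x ^ 2 + y ^ 2) ^ 2 + (4 x y) ^ 2 = z ^ 2` is a primitive Pythagorean triple, so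
`x ^ 2 + y ^ 2 = m ^ 2 - 4 n ^ 2`, `x y = m n` and `|z| = m ^ 2 + 4 n ^ 2`. Writing `x = a b`,
`y = c d`, `m = a c`, `n = b d` gives `b ^ 2 (a ^ 2 + 4 d ^ 2) = c ^ 2 (a ^ 2 - d ^ 2)`, hence
`a ^ 2 + 4 d ^ 2 = e c ^ 2` and `a ^ 2 - d ^ 2 = e b ^ 2` with `e ∣ 5`. Now `e = 5` is impossible
mod `8`, and `e = 1` makes `(b, d, a)` a primitive triple `(s ^ 2 - t ^ 2, 2 s t, s ^ 2 + t ^ 2)`,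
so that `c ^ 2 = s ^ 4 + 18 s ^ 2 t ^ 2 + t ^ 4` with `|c| < |z|`.
-/

theorem exists_four_of_mul_eq_mul {α : Type*} [CommMonoidWithZero α] [IsLeftCancelMulZero α]
    [DecompositionMonoid α] {x y m n : α} (hx : x ≠ 0) (h : x * y = m * n) :
    ∃ a b c d, x = a * b ∧ y = c * d ∧ m = a * c ∧ n = b * d := by
  obtain ⟨a, b, ⟨c, rfl⟩, ⟨d, rfl⟩, rfl⟩ := exists_dvd_and_dvd_of_dvd_mul (Dvd.intro y h)
  refine ⟨a, b, c, d, rfl, mul_left_cancel₀ hx ?_, rfl, rfl⟩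
  rw [h, mul_mul_mul_comm]

namespace Pocklington

variable {x y z : ℤ}

theorem quartic_eq_sq_add_sq (x y : ℤ) :
    x ^ 4 + 18 * x ^ 2 * y ^ 2 + y ^ 4 = (x ^ 2 + y ^ 2) ^ 2 + (4 * x * y) ^ 2 := by
  ring

theorem quartic_ne_sq_of_odd_of_odd (hx : Odd x) (hy : Odd y) :
    x ^ 4 + 18 * x ^ 2 * y ^ 2 + y ^ 4 ≠ z ^ 2 := by
  intro h
  obtain ⟨u, hu⟩ := Int.eight_dvd_sq_sub_one_of_odd hx
  obtain ⟨v, hv⟩ := Int.eight_dvd_sq_sub_one_of_odd hy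
  set N := 2 * u ^ 2 + 36 * u * v + 2 * v ^ 2 + 5 * u + 5 * v
  have hz : z ^ 2 = 4 * (8 * N + 5) := by
    linear_combination -h + (x ^ 2 + 8 * u + 1 + 18 * y ^ 2) * hu +
      (y ^ 2 + 8 * v + 1 + 18 * (8 * u + 1)) * hv
  obtain ⟨w, rfl⟩ : Even z :=
    (Int.even_pow' two_ne_zero).mp ⟨2 * (8 * N + 5), by rw [hz]; ring⟩
  have hw : w ^ 2 = 8 * N + 5 := mul_left_cancel₀ four_ne_zero (by linear_combination hz)
  -- an odd square is `1` mod `8`, never `5`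
  have hw_odd : Odd w := (Int.odd_pow' two_ne_zero).mp ⟨4 * N + 2, by rw [hw]; ring⟩
  obtain ⟨j, hj⟩ := Int.eight_dvd_sq_sub_one_of_odd hw_odd
  have : 8 * (j - N) = 4 := by linear_combination -hj + hw
  omega

theorem exists_isCoprime_of_quartic_eq_sq (hx : x ≠ 0) (hy : y ≠ 0)
    (h : x ^ 4 + 18 * x ^ 2 * y ^ 2 + y ^ 4 = z ^ 2) :
    ∃ x' y' z' : ℤ, IsCoprime x' y' ∧ x' ≠ 0 ∧ y' ≠ 0 ∧
      x' ^ 4 + 18 * x' ^ 2 * y' ^ 2 + y' ^ 4 = z' ^ 2 := by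
  obtain ⟨g, x', y', hg, hxy, rfl, rfl⟩ :=
    Int.exists_gcd_one' (Int.gcd_pos_of_ne_zero_left y hx)
  have hg0 : (g : ℤ) ≠ 0 := by exact_mod_cast hg.ne'
  have hQ : (g : ℤ) ^ 4 * (x' ^ 4 + 18 * x' ^ 2 * y' ^ 2 + y' ^ 4) = z ^ 2 := by
    linear_combination h
  obtain ⟨z', rfl⟩ : (g : ℤ) ^ 2 ∣ z :=
    (Int.pow_dvd_pow_iff two_ne_zero).mp
      ⟨x' ^ 4 + 18 * x' ^ 2 * y' ^ 2 + y' ^ 4, by rw [← hQ]; ring⟩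
  refine ⟨x', y', z', Int.isCoprime_iff_gcd_eq_one.mpr hxy, left_ne_zero_of_mul hx,
    left_ne_zero_of_mul hy, mul_left_cancel₀ (pow_ne_zero 4 hg0) ?_⟩
  linear_combination hQ

theorem exists_parametrization_of_quartic_eq_sq (hxy : IsCoprime x y) (hx : Odd x)
    (hy : Even y) (h : x ^ 4 + 18 * x ^ 2 * y ^ 2 + y ^ 4 = z ^ 2) :
    ∃ m n, x ^ 2 + y ^ 2 = m ^ 2 - 4 * n ^ 2 ∧ x * y = m * n ∧ |z| = m ^ 2 + 4 * n ^ 2 ∧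
      Odd m := by
  have hsum_odd : Odd (x ^ 2 + y ^ 2) := hx.pow.add_even (hy.pow_of_ne_zero two_ne_zero)
  have hcop : IsCoprime (x ^ 2 + y ^ 2) (2 * 2 * x * y) := by
    have h2 : IsCoprime (x ^ 2 + y ^ 2) 2 := Int.isCoprime_two_right.mpr hsum_odd
    have hx' : IsCoprime (x ^ 2 + y ^ 2) x := by
      rw [add_comm, sq x, IsCoprime.add_mul_left_left_iff]; exact hxy.symm.pow_left
    have hy' : IsCoprime (x ^ 2 + y ^ 2) y := by
      rw [sq y, IsCoprime.add_mul_left_left_iff]; exact hxy.pow_left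
    exact ((h2.mul_right h2).mul_right hx').mul_right hy'
  have hpt : PythagoreanTriple (x ^ 2 + y ^ 2) (4 * x * y) |z| := by
    rw [PythagoreanTriple, ← sq, ← sq, ← sq, sq_abs, ← h, quartic_eq_sq_add_sq]
  have hz : 0 < |z| := by
    have : x ≠ 0 := by rintro rfl; simp at hx
    have : 0 < z ^ 2 := h ▸ by positivity
    exact abs_pos.mpr (by rintro rfl; simp at this)
  obtain ⟨m, n, hsum, hprod, hzmn, -, hpar, -⟩ := hpt.coprime_classification'
    (Int.isCoprime_iff_gcd_eq_one.mp (by simpa [mul_assoc] using hcop))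
    (Int.odd_iff.mp hsum_odd) hz
  -- `x ^ 2 + y ^ 2` is `1` mod `4`, so the odd one of `m`, `n` is `m`
  obtain ⟨hm, hn⟩ : Odd m ∧ Even n := by
    rcases hpar with ⟨hm, hn⟩ | ⟨hm, hn⟩
    · have h4 : ∀ w : ℤ, Even w → w ^ 2 % 4 = 0 := fun w ⟨k, hk⟩ ↦ by
        rw [hk, show (k + k) ^ 2 = 4 * k ^ 2 by ring]; simp
      have := Int.sq_mod_four_eq_one_of_odd hx
      have := Int.sq_mod_four_eq_one_of_odd (Int.odd_iff.mpr hn)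
      have := h4 y hy
      have := h4 m (Int.even_iff.mpr hm)
      omega
    · exact ⟨Int.odd_iff.mpr hm, Int.even_iff.mpr hn⟩
  obtain ⟨k, rfl⟩ := hn
  refine ⟨m, k, by linear_combination hsum, ?_, by linear_combination hzmn, hm⟩
  linarith

theorem sq_eq_of_mul_sq_eq_mul_sq {a b c d : ℤ} (hbc : IsCoprime b c) (had : IsCoprime a d)
    (ha : Odd a) (hb : Odd b) (hc : Odd c)
    (h : b ^ 2 * (a ^ 2 + 4 * d ^ 2) = c ^ 2 * (a ^ 2 - d ^ 2)) :
    a ^ 2 = b ^ 2 + d ^ 2 ∧ c ^ 2 = a ^ 2 + 4 * d ^ 2 := by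
  obtain ⟨e, he⟩ : c ^ 2 ∣ a ^ 2 + 4 * d ^ 2 := hbc.symm.pow.dvd_of_dvd_mul_left ⟨_, h⟩
  have hc0 : c ^ 2 ≠ 0 := pow_ne_zero 2 (by rintro rfl; simp at hc)
  have hbe : a ^ 2 - d ^ 2 = b ^ 2 * e :=
    mul_left_cancel₀ hc0 (by linear_combination -h + b ^ 2 * he)
  have he_pos : 0 < e := by
    have : a ≠ 0 := by rintro rfl; simp at ha
    have : 0 < c ^ 2 * e := he ▸ by positivity
    exact pos_of_mul_pos_right this (sq_nonneg c)
  -- `e` divides `5 a ^ 2` and `5 d ^ 2`, hence `5`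
  have he5 : e ∣ 5 := by
    obtain ⟨u, v, huv⟩ := had.pow (m := 2) (n := 2)
    exact ⟨u * (4 * b ^ 2 + c ^ 2) + v * (c ^ 2 - b ^ 2), by
      linear_combination -5 * huv + u * (he + 4 * hbe) + v * (he - hbe)⟩
  have he15 : e = 1 ∨ e = 5 := by
    have := Int.le_of_dvd (by norm_num) he5
    interval_cases e <;> simp_all
  rcases he15 with rfl | rfl
  · exact ⟨by linear_combination hbe, by linear_combination -he⟩
  · -- then `a ^ 2 = 4 b ^ 2 + c ^ 2`, impossible mod `8` for odd `a, b, c`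
    obtain ⟨p, hp⟩ := Int.eight_dvd_sq_sub_one_of_odd ha
    obtain ⟨q, hq⟩ := Int.eight_dvd_sq_sub_one_of_odd hb
    obtain ⟨r, hr⟩ := Int.eight_dvd_sq_sub_one_of_odd hc
    have : 40 * (p - r - 4 * q) = 20 := by
      linear_combination -5 * hp + 5 * hr + 20 * hq + he + 4 * hbe
    omega

theorem exists_quartic_eq_sq_of_sq_add_sq {a b c d : ℤ} (hbd : IsCoprime b d) (hb : Odd b)
    (hd : d ≠ 0) (habd : a ^ 2 = b ^ 2 + d ^ 2) (hacd : c ^ 2 = a ^ 2 + 4 * d ^ 2) :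
    ∃ s t, IsCoprime s t ∧ s ≠ 0 ∧ t ≠ 0 ∧ s ^ 4 + 18 * s ^ 2 * t ^ 2 + t ^ 4 = c ^ 2 := by
  have hpt : PythagoreanTriple b d |a| := by
    rw [PythagoreanTriple, ← sq, ← sq, ← sq, sq_abs, habd]
  have ha : 0 < |a| := by
    have : 0 < a ^ 2 := habd ▸ by positivity
    exact abs_pos.mpr (by rintro rfl; simp at this)
  obtain ⟨s, t, -, hdst, hast, hst, -, -⟩ := hpt.coprime_classification'
    (Int.isCoprime_iff_gcd_eq_one.mp hbd) (Int.odd_iff.mp hb) ha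
  refine ⟨s, t, Int.isCoprime_iff_gcd_eq_one.mpr hst, ?_, ?_, ?_⟩
  · rintro rfl; simp_all
  · rintro rfl; simp_all
  · rw [quartic_eq_sq_add_sq, hacd, ← sq_abs a, hast, hdst]; ring

theorem exists_descent_of_odd_of_even (hxy : IsCoprime x y) (hx : Odd x) (hy : Even y)
    (hy0 : y ≠ 0) (h : x ^ 4 + 18 * x ^ 2 * y ^ 2 + y ^ 4 = z ^ 2) :
    ∃ s t c : ℤ, IsCoprime s t ∧ s ≠ 0 ∧ t ≠ 0 ∧ s ^ 4 + 18 * s ^ 2 * t ^ 2 + t ^ 4 = c ^ 2 ∧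
      c.natAbs < z.natAbs := by
  obtain ⟨m, n, hsum, hprod, hz, hm⟩ := exists_parametrization_of_quartic_eq_sq hxy hx hy h
  obtain ⟨a, b, c, d, rfl, rfl, rfl, rfl⟩ :=
    exists_four_of_mul_eq_mul (by rintro rfl; simp at hx) hprod
  rw [Int.odd_mul] at hx hm
  have hb : b ≠ 0 := by rintro rfl; simp at hx
  have hd : d ≠ 0 := right_ne_zero_of_mul hy0
  obtain ⟨habd, hacd⟩ := sq_eq_of_mul_sq_eq_mul_sq hxy.of_mul_left_right.of_mul_right_left
    hxy.of_mul_left_left.of_mul_right_right hx.1 hx.2 hm.2 (by linear_combination hsum)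
  obtain ⟨s, t, hst, hs, ht, hQ⟩ :=
    exists_quartic_eq_sq_of_sq_add_sq hxy.of_mul_left_right.of_mul_right_right hx.2 hd habd hacd
  refine ⟨s, t, c, hst, hs, ht, hQ, ?_⟩
  have hbd : 0 < (b * d) ^ 2 := by positivity
  have ha : a ≠ 0 := by rintro rfl; simp at hx
  zify
  calc |c| ≤ |a * c| := by
        rw [abs_mul]; exact le_mul_of_one_le_left (abs_nonneg c) (Int.one_le_abs ha)
    _ ≤ (a * c) ^ 2 := by simpa using Int.natAbs_le_self_sq (a * c)
    _ < |z| := by rw [hz]; linarith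

theorem exists_descent (hxy : IsCoprime x y) (hx : x ≠ 0) (hy : y ≠ 0)
    (h : x ^ 4 + 18 * x ^ 2 * y ^ 2 + y ^ 4 = z ^ 2) :
    ∃ s t c : ℤ, IsCoprime s t ∧ s ≠ 0 ∧ t ≠ 0 ∧ s ^ 4 + 18 * s ^ 2 * t ^ 2 + t ^ 4 = c ^ 2 ∧
      c.natAbs < z.natAbs := by
  rcases Int.even_or_odd x with hxe | hxo <;> rcases Int.even_or_odd y with hye | hyo
  · have := hxy.isUnit_of_dvd' hxe.two_dvd hye.two_dvd
    norm_num [Int.isUnit_iff] at this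
  · exact exists_descent_of_odd_of_even hxy.symm hyo hxe hx (by linear_combination h)
  · exact exists_descent_of_odd_of_even hxy hxo hye hy h
  · exact absurd h (quartic_ne_sq_of_odd_of_odd hxo hyo)

theorem quartic_ne_sq_of_isCoprime (hxy : IsCoprime x y) (hx : x ≠ 0) (hy : y ≠ 0) :
    x ^ 4 + 18 * x ^ 2 * y ^ 2 + y ^ 4 ≠ z ^ 2 := by
  induction hn : z.natAbs using Nat.strong_induction_on generalizing x y z with
  | _ n ih =>
  intro h
  obtain ⟨s, t, c, hst, hs, ht, hQ, hc⟩ := exists_descent hxy hx hy h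
  exact ih _ (hn ▸ hc) hst hs ht rfl hQ

end Pocklington

/-- Pocklington's lemma: if `x` and `y` are nonzero integers, then
`x^4 + 18x^2y^2 + y^4` is not a perfect square. -/
theorem pocklington (x y : ℤ) (hx : x ≠ 0) (hy : y ≠ 0) :
    ¬ ∃ z : ℤ, x ^ 4 + 18 * x ^ 2 * y ^ 2 + y ^ 4 = z ^ 2 := by
  rintro ⟨z, h⟩
  obtain ⟨x', y', z', hxy, hx', hy', h'⟩ := Pocklington.exists_isCoprime_of_quartic_eq_sq hx hy h
  exact Pocklington.quartic_ne_sq_of_isCoprime hxy hx' hy' h'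
end

section
/- For every n in the set {2, 3, 4, 5, 9, 11, 16} and every Euler brick (a, b, c), at least one of the sides a, b, c is divisible by n. -/
/-- In any Pythagorean equation, 3 divides one of the legs. -/
lemma eb_pair3 {a b k : ℕ} (h : a ^ 2 + b ^ 2 = k ^ 2) : 3 ∣ a ∨ 3 ∣ b := by
  have key : ∀ x y z : ZMod 3, x ^ 2 + y ^ 2 = z ^ 2 → x = 0 ∨ y = 0 := by decide
  have hc : ((a : ZMod 3)) ^ 2 + (b : ZMod 3) ^ 2 = (k : ZMod 3) ^ 2 := by
    have := congrArg (Nat.cast : ℕ → ZMod 3) h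
    push_cast at this; exact this
  rcases key _ _ _ hc with h0 | h0
  · exact Or.inl ((ZMod.natCast_eq_zero_iff a 3).mp h0)
  · exact Or.inr ((ZMod.natCast_eq_zero_iff b 3).mp h0)

/-- In any Pythagorean equation, 4 divides one of the legs. -/
lemma eb_pair4 {a b k : ℕ} (h : a ^ 2 + b ^ 2 = k ^ 2) : 4 ∣ a ∨ 4 ∣ b := by
  have key : ∀ x y z : ZMod 16, x ^ 2 + y ^ 2 = z ^ 2 →
      ZMod.castHom (show 4 ∣ 16 by norm_num) (ZMod 4) x = 0 ∨
      ZMod.castHom (show 4 ∣ 16 by norm_num) (ZMod 4) y = 0 := by decide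
  have hc : ((a : ZMod 16)) ^ 2 + (b : ZMod 16) ^ 2 = (k : ZMod 16) ^ 2 := by
    have := congrArg (Nat.cast : ℕ → ZMod 16) h
    push_cast at this; exact this
  rcases key _ _ _ hc with h0 | h0
  · rw [map_natCast] at h0
    exact Or.inl ((ZMod.natCast_eq_zero_iff a 4).mp h0)
  · rw [map_natCast] at h0
    exact Or.inr ((ZMod.natCast_eq_zero_iff b 4).mp h0)

lemma eb_pair9 {a b k : ℕ} (h : a ^ 2 + b ^ 2 = k ^ 2) (ha : 3 ∣ a) (hb : 3 ∣ b) :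
    9 ∣ a ∨ 9 ∣ b := by
  obtain ⟨a', rfl⟩ := ha
  obtain ⟨b', rfl⟩ := hb
  have hk : 3 ∣ k := by
    have h9 : 3 ^ 2 ∣ k ^ 2 := ⟨a' ^ 2 + b' ^ 2, by linear_combination -h⟩
    exact (Nat.pow_dvd_pow_iff (by norm_num)).mp h9
  obtain ⟨k', rfl⟩ := hk
  have h' : a' ^ 2 + b' ^ 2 = k' ^ 2 := by nlinarith [h]
  rcases eb_pair3 h' with h0 | h0
  · exact Or.inl (Nat.mul_dvd_mul_left 3 h0)
  · exact Or.inr (Nat.mul_dvd_mul_left 3 h0)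

lemma eb_pair16 {a b k : ℕ} (h : a ^ 2 + b ^ 2 = k ^ 2) (ha : 4 ∣ a) (hb : 4 ∣ b) :
    16 ∣ a ∨ 16 ∣ b := by
  obtain ⟨a', rfl⟩ := ha
  obtain ⟨b', rfl⟩ := hb
  have hk : 4 ∣ k := by
    have h16 : 4 ^ 2 ∣ k ^ 2 := ⟨a' ^ 2 + b' ^ 2, by linear_combination -h⟩
    exact (Nat.pow_dvd_pow_iff (by norm_num)).mp h16
  obtain ⟨k', rfl⟩ := hk
  have h' : a' ^ 2 + b' ^ 2 = k' ^ 2 := by nlinarith [h]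
  rcases eb_pair4 h' with h0 | h0
  · exact Or.inl (Nat.mul_dvd_mul_left 4 h0)
  · exact Or.inr (Nat.mul_dvd_mul_left 4 h0)

set_option synthInstance.maxSize 400 in
lemma eb_key5 : ∀ x y u : ZMod 5, (∃ z : ZMod 5, x ^ 2 + y ^ 2 = z ^ 2) →
    (∃ z : ZMod 5, x ^ 2 + u ^ 2 = z ^ 2) → (∃ z : ZMod 5, y ^ 2 + u ^ 2 = z ^ 2) →
    x = 0 ∨ y = 0 ∨ u = 0 := by decide

set_option synthInstance.maxSize 400 in
set_option maxHeartbeats 4000000 in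
lemma eb_key11 : ∀ x y u : ZMod 11, (∃ z : ZMod 11, x ^ 2 + y ^ 2 = z ^ 2) →
    (∃ z : ZMod 11, x ^ 2 + u ^ 2 = z ^ 2) → (∃ z : ZMod 11, y ^ 2 + u ^ 2 = z ^ 2) →
    x = 0 ∨ y = 0 ∨ u = 0 := by decide

/-- An Euler brick: a triple of positive integers all of whose pairwise sums of
squares are perfect squares. -/
def IsEulerBrick (a b c : ℕ) : Prop :=
  0 < a ∧ 0 < b ∧ 0 < c ∧
  (∃ k : ℕ, a ^ 2 + b ^ 2 = k ^ 2) ∧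
  (∃ k : ℕ, a ^ 2 + c ^ 2 = k ^ 2) ∧
  (∃ k : ℕ, b ^ 2 + c ^ 2 = k ^ 2)

/-- For every `n ∈ {2, 3, 4, 5, 9, 11, 16}` and every Euler brick `(a, b, c)`,
at least one of the sides is divisible by `n`. -/
theorem euler_brick_divisibility :
    ∀ n ∈ ({2, 3, 4, 5, 9, 11, 16} : Set ℕ), ∀ a b c : ℕ,
      IsEulerBrick a b c → n ∣ a ∨ n ∣ b ∨ n ∣ c := by
  intro n hn a b c hE
  obtain ⟨-, -, -, ⟨k1, h1⟩, ⟨k2, h2⟩, ⟨k3, h3⟩⟩ := hE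
  have cast_eq : ∀ (m : ℕ) (x y k : ℕ), x ^ 2 + y ^ 2 = k ^ 2 →
      (x : ZMod m) ^ 2 + (y : ZMod m) ^ 2 = (k : ZMod m) ^ 2 := by
    intro m x y k h
    have := congrArg (Nat.cast : ℕ → ZMod m) h
    push_cast at this; exact this
  simp only [Set.mem_insert_iff, Set.mem_singleton_iff] at hn
  rcases hn with rfl | rfl | rfl | rfl | rfl | rfl | rfl
  · -- n = 2
    rcases eb_pair4 h1 with h | h
    · exact Or.inl (dvd_trans (by norm_num) h)
    · exact Or.inr (Or.inl (dvd_trans (by norm_num) h))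
  · -- n = 3
    rcases eb_pair3 h1 with h | h
    · exact Or.inl h
    · exact Or.inr (Or.inl h)
  · -- n = 4
    rcases eb_pair4 h1 with h | h
    · exact Or.inl h
    · exact Or.inr (Or.inl h)
  · -- n = 5
    have := eb_key5 a b c ⟨k1, cast_eq 5 _ _ _ h1⟩ ⟨k2, cast_eq 5 _ _ _ h2⟩
      ⟨k3, cast_eq 5 _ _ _ h3⟩
    rcases this with h | h | h
    · exact Or.inl ((ZMod.natCast_eq_zero_iff a 5).mp h)
    · exact Or.inr (Or.inl ((ZMod.natCast_eq_zero_iff b 5).mp h))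
    · exact Or.inr (Or.inr ((ZMod.natCast_eq_zero_iff c 5).mp h))
  · -- n = 9
    rcases eb_pair3 h1 with ha | hb <;> rcases eb_pair3 h2 with ha' | hc <;>
      rcases eb_pair3 h3 with hb' | hc'
    · rcases eb_pair9 h1 ha hb' with h | h
      · exact Or.inl h
      · exact Or.inr (Or.inl h)
    · rcases eb_pair9 h2 ha hc' with h | h
      · exact Or.inl h
      · exact Or.inr (Or.inr h)
    · rcases eb_pair9 h3 hb' hc with h | h
      · exact Or.inr (Or.inl h)
      · exact Or.inr (Or.inr h)
    · rcases eb_pair9 h2 ha hc' with h | h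
      · exact Or.inl h
      · exact Or.inr (Or.inr h)
    · rcases eb_pair9 h1 ha' hb with h | h
      · exact Or.inl h
      · exact Or.inr (Or.inl h)
    · rcases eb_pair9 h1 ha' hb with h | h
      · exact Or.inl h
      · exact Or.inr (Or.inl h)
    · rcases eb_pair9 h3 hb hc with h | h
      · exact Or.inr (Or.inl h)
      · exact Or.inr (Or.inr h)
    · rcases eb_pair9 h3 hb hc with h | h
      · exact Or.inr (Or.inl h)
      · exact Or.inr (Or.inr h)
  · -- n = 11
    have := eb_key11 a b c ⟨k1, cast_eq 11 _ _ _ h1⟩ ⟨k2, cast_eq 11 _ _ _ h2⟩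
      ⟨k3, cast_eq 11 _ _ _ h3⟩
    rcases this with h | h | h
    · exact Or.inl ((ZMod.natCast_eq_zero_iff a 11).mp h)
    · exact Or.inr (Or.inl ((ZMod.natCast_eq_zero_iff b 11).mp h))
    · exact Or.inr (Or.inr ((ZMod.natCast_eq_zero_iff c 11).mp h))
  · -- n = 16
    rcases eb_pair4 h1 with ha | hb <;> rcases eb_pair4 h2 with ha' | hc <;>
      rcases eb_pair4 h3 with hb' | hc'
    · rcases eb_pair16 h1 ha hb' with h | h
      · exact Or.inl h
      · exact Or.inr (Or.inl h)
    · rcases eb_pair16 h2 ha hc' with h | h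
      · exact Or.inl h
      · exact Or.inr (Or.inr h)
    · rcases eb_pair16 h3 hb' hc with h | h
      · exact Or.inr (Or.inl h)
      · exact Or.inr (Or.inr h)
    · rcases eb_pair16 h2 ha hc' with h | h
      · exact Or.inl h
      · exact Or.inr (Or.inr h)
    · rcases eb_pair16 h1 ha' hb with h | h
      · exact Or.inl h
      · exact Or.inr (Or.inl h)
    · rcases eb_pair16 h1 ha' hb with h | h
      · exact Or.inl h
      · exact Or.inr (Or.inl h)
    · rcases eb_pair16 h3 hb hc with h | h
      · exact Or.inr (Or.inl h)
      · exact Or.inr (Or.inr h)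
    · rcases eb_pair16 h3 hb hc with h | h
      · exact Or.inr (Or.inl h)
      · exact Or.inr (Or.inr h)
end

section
/- For all positive integers s, t with s ≠ t, the number s^8 + 68 s^6 t^2 - 122 s^4 t^4 + 68 s^2 t^6 + t^8 is not a perfect square. Consequently the two-parameter Saunderson family a = 6ts^5 - 20t^3s^3 + 6t^5s, b = -s^6 + 15t^2s^4 - 15t^4s^2 + t^6, c = 8s^5t - 8st^5 contains no perfect Euler brick. -/
/-!
Writing `u = x² + y²` and `v = x² - y²`, the equation `z² = x⁴ + 18x²y² + y⁴` reads
`z² + (2v)² = 5u²`. Dividing by the Gaussian integer `1 + 2i` gives a primitive Pythagorean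
triple `α² + β² = u²` with `2α + β = 2v`, and its parametrisation `α = m² - n²`, `β = 2mn`,
`u = m² + n²` yields `2x² = m(2m + n)` and `2y² = n(2n - m)`. Splitting these products of
coprime factors into squares produces `b² + e² = a²` and `b² + 5e² = f²` with `4e⁴ ≤ x² + y²`;
parametrising the primitive triple under `(b, e, a)` as `b = m'² - n'²`, `e = 2m'n'` turns
`b² + 5e² = f²` back into `f² = m'⁴ + 18m'²n'² + n'⁴` with `m'² + n'² < x² + y²`, so by descent
the quartic is never a square when `xy ≠ 0` (Pocklington).

For the Saunderson family, `s⁸ + 68s⁶t² - 122s⁴t⁴ + 68s²t⁶ + t⁸` is this quartic at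
`x = 2st`, `y = s² - t²`, and the squared space diagonal `a² + b² + c²` of the brick is
`(s² + t²)²` times it.
-/

theorem exists_eq_pow_of_pow_eq_pow_mul {R : Type*} [CommRing R] [IsDomain R]
    [IsIntegrallyClosed R] {n : ℕ} (hn : n ≠ 0) {a g c : R} (hg : g ≠ 0)
    (h : a ^ n = g ^ n * c) : ∃ b, c = b ^ n := by
  obtain ⟨b, rfl⟩ := (IsIntegrallyClosed.pow_dvd_pow_iff hn).mp ⟨c, h⟩
  exact ⟨b, mul_left_cancel₀ (pow_ne_zero n hg) (by rw [← h, mul_pow])⟩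

namespace Int

theorem exists_sq_eq_eight_mul_add_one_of_odd {x : ℤ} (hx : Odd x) :
    ∃ i, x ^ 2 = 8 * i + 1 := by
  obtain ⟨k, rfl⟩ := hx
  obtain ⟨i, hi⟩ := even_mul_succ_self k
  exact ⟨i, by linear_combination 4 * hi⟩

theorem exists_sq_sq_of_isCoprime_of_mul_eq_sq {a b c : ℤ} (hab : IsCoprime a b)
    (h : a * b = c ^ 2) (hc : c ≠ 0) :
    ∃ u v, a = u ^ 2 ∧ b = v ^ 2 ∨ a = -u ^ 2 ∧ b = -v ^ 2 := by
  obtain ⟨u, hu⟩ := sq_of_isCoprime hab h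
  obtain ⟨v, hv⟩ := sq_of_isCoprime hab.symm (by rw [mul_comm, h])
  have hc2 : 0 < c ^ 2 := by positivity
  refine ⟨u, v, ?_⟩
  rcases hu with rfl | rfl <;> rcases hv with rfl | rfl
  · exact .inl ⟨rfl, rfl⟩
  · nlinarith [sq_nonneg (u * v)]
  · nlinarith [sq_nonneg (u * v)]
  · exact .inr ⟨rfl, rfl⟩

end Int

theorem exists_sq_add_sq_eq_sq_of_sq_add_sq_eq_five_mul_sq {z w u : ℤ}
    (h : z ^ 2 + w ^ 2 = 5 * u ^ 2) :
    ∃ α β : ℤ, α ^ 2 + β ^ 2 = u ^ 2 ∧ 2 * α + β = w ∧ (α - 2 * β = z ∨ α - 2 * β = -z) := by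
  have h5 : (5 : ℤ) ∣ (z + 2 * w) * (2 * w - z) := ⟨w ^ 2 - u ^ 2, by linear_combination -h⟩
  obtain ⟨α, hα⟩ : ∃ α, z + 2 * w = 5 * α ∨ 2 * w - z = 5 * α := by
    rcases (show Prime (5 : ℤ) by norm_num).dvd_or_dvd h5 with ⟨α, hα⟩ | ⟨α, hα⟩
    exacts [⟨α, .inl hα⟩, ⟨α, .inr hα⟩]
  refine ⟨α, w - 2 * α, ?_, by ring, ?_⟩
  · -- `5 (α² + β²) = (α - 2β)² + (2α + β)²`
    refine mul_left_cancel₀ (by norm_num : (5 : ℤ) ≠ 0) ?_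
    rcases hα with hα | hα
    · linear_combination h - (z + 5 * α - 2 * w) * hα
    · linear_combination h + (z + 2 * w - 5 * α) * hα
  · rcases hα with hα | hα
    exacts [.inl (by linear_combination -hα), .inr (by linear_combination -hα)]

theorem isCoprime_of_sq_add_sq_eq_sq {x y α β : ℤ} (hxy : IsCoprime x y) (hα : Odd α)
    (h : α ^ 2 + β ^ 2 = (x ^ 2 + y ^ 2) ^ 2) (hv : 2 * α + β = 2 * (x ^ 2 - y ^ 2)) :
    IsCoprime α β := by
  refine isCoprime_of_prime_dvd (fun h0 => by simp [h0.1] at hα) fun p hp hpα hpβ => ?_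
  have hp2 : ¬ p ∣ 2 := fun hp2 => by
    obtain ⟨k, rfl⟩ := hα
    exact hp.not_isUnit
      (isUnit_of_dvd_one (by simpa using dvd_sub hpα (dvd_mul_of_dvd_left hp2 k)))
  have hpu : p ∣ x ^ 2 + y ^ 2 :=
    hp.dvd_of_dvd_pow (n := 2) (h ▸ dvd_add (dvd_pow hpα two_ne_zero) (dvd_pow hpβ two_ne_zero))
  have hpv : p ∣ x ^ 2 - y ^ 2 :=
    (hp.dvd_or_dvd (hv ▸ dvd_add (hpα.mul_left 2) hpβ)).resolve_left hp2
  have hpx : p ∣ x := by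
    refine hp.dvd_of_dvd_pow (n := 2) ((hp.dvd_or_dvd ?_).resolve_left hp2)
    convert dvd_add hpu hpv using 1; ring
  have hpy : p ∣ y := by
    refine hp.dvd_of_dvd_pow (n := 2) ((hp.dvd_or_dvd ?_).resolve_left hp2)
    convert dvd_sub hpu hpv using 1; ring
  exact hp.not_isUnit (hxy.isUnit_of_dvd' hpx hpy)

theorem exists_mul_eq_of_sq_eq_quartic {x y z : ℤ} (hxy : IsCoprime x y) (hx : Odd x)
    (hy : Even y) (hz : z ^ 2 = x ^ 4 + 18 * x ^ 2 * y ^ 2 + y ^ 4) :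
    ∃ m n : ℤ, IsCoprime m n ∧ (Odd m ∧ Even n ∨ Even m ∧ Odd n) ∧
      2 * x ^ 2 = m * (2 * m + n) ∧ 2 * y ^ 2 = n * (2 * n - m) := by
  have hz_odd : Odd z := by
    have : Odd (z ^ 2) := by rw [hz]; simp [parity_simps, hx, hy]
    exact (Int.odd_pow.mp this).resolve_right two_ne_zero
  obtain ⟨α, β, hαβ, hw, hz'⟩ := exists_sq_add_sq_eq_sq_of_sq_add_sq_eq_five_mul_sq
    (z := z) (w := 2 * (x ^ 2 - y ^ 2)) (u := x ^ 2 + y ^ 2) (by linear_combination hz)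
  have hα : Odd α := by
    rcases hz' with h | h
    · simpa [show α = z + 2 * β by linarith, parity_simps] using hz_odd
    · simpa [show α = -z + 2 * β by linarith, parity_simps] using hz_odd
  have hu : 0 < x ^ 2 + y ^ 2 := by
    have : x ≠ 0 := by rintro rfl; simp at hx
    positivity
  obtain ⟨m, n, rfl, rfl, hmn_u, hmn, hpar, -⟩ := PythagoreanTriple.coprime_classification'
    (by unfold PythagoreanTriple; linear_combination hαβ)
    (Int.isCoprime_iff_gcd_eq_one.mp (isCoprime_of_sq_add_sq_eq_sq hxy hα hαβ hw))
    (Int.odd_iff.mp hα) hu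
  refine ⟨m, n, Int.isCoprime_iff_gcd_eq_one.mpr hmn, ?_, by linarith, by linarith⟩
  simpa only [Int.odd_iff, Int.even_iff, or_comm, and_comm] using hpar

theorem exists_sq_add_sq_and_sq_add_five_mul_sq {m N x y : ℤ} (hmN : IsCoprime m N)
    (hm : Odd m) (hx : x ≠ 0) (hy : y ≠ 0) (hx2 : x ^ 2 = m * (m + N))
    (hy2 : y ^ 2 = N * (4 * N - m)) :
    ∃ b e a f : ℤ, e ≠ 0 ∧ 4 * e ^ 4 ≤ x ^ 2 + y ^ 2 ∧
      b ^ 2 + e ^ 2 = a ^ 2 ∧ b ^ 2 + 5 * e ^ 2 = f ^ 2 := by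
  obtain ⟨a, b, hab⟩ := Int.exists_sq_sq_of_isCoprime_of_mul_eq_sq
    (by simpa [add_comm] using hmN.add_mul_left_right 1) hx2.symm hx
  obtain ⟨e, f, hef⟩ := Int.exists_sq_sq_of_isCoprime_of_mul_eq_sq
    (by simpa [sub_eq_neg_add, mul_comm] using hmN.symm.neg_right.add_mul_left_right 4)
    hy2.symm hy
  have he : e ≠ 0 := by rintro rfl; rcases hef with ⟨h, -⟩ | ⟨h, -⟩ <;> simp_all
  have h4N : Odd (4 * N - m) := by obtain ⟨k, rfl⟩ := hm; exact ⟨2 * N - k - 1, by ring⟩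
  have sq_mod_four {c k : ℤ} (hc : Odd k) (h : k = c ^ 2 ∨ k = -c ^ 2) : c ^ 2 % 4 = 1 := by
    refine Int.sq_mod_four_eq_one_of_odd ((Int.odd_pow.mp ?_).resolve_right two_ne_zero)
    rcases h with rfl | rfl <;> simpa using hc
  have ha4 := sq_mod_four hm (hab.imp (·.1) (·.1))
  have hf4 := sq_mod_four h4N (hef.imp (·.2) (·.2))
  have bound : 4 * e ^ 4 ≤ x ^ 2 + y ^ 2 := by
    rcases hef with ⟨rfl, -⟩ | ⟨rfl, -⟩ <;> nlinarith [sq_nonneg m, hx2, hy2]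
  -- Equal signs of `m` and `N` would give `a² + f² = ±4e²` with `a, f` odd, impossible mod 4.
  rcases hab with ⟨hma, hmb⟩ | ⟨hma, hmb⟩ <;> rcases hef with ⟨hNe, hNf⟩ | ⟨hNe, hNf⟩
  · omega
  · exact ⟨b, e, a, f, he, bound, by linarith, by linarith⟩
  · exact ⟨b, e, a, f, he, bound, by linarith, by linarith⟩
  · omega

theorem even_of_sq_add_sq_eq_sq_of_sq_add_five_mul_sq_eq_sq {b e a f : ℤ}
    (h1 : b ^ 2 + e ^ 2 = a ^ 2) (h2 : b ^ 2 + 5 * e ^ 2 = f ^ 2) : Even e := by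
  by_contra he
  obtain ⟨i, hi⟩ := Int.exists_sq_eq_eight_mul_add_one_of_odd (Int.not_even_iff_odd.mp he)
  have h1' := congrArg (Int.cast : ℤ → ZMod 8) h1
  have h2' := congrArg (Int.cast : ℤ → ZMod 8) h2
  push_cast [hi] at h1' h2'
  simp only [show (8 : ZMod 8) = 0 from rfl, zero_mul, zero_add] at h1' h2'
  exact (by decide : ∀ b a f : ZMod 8, b ^ 2 + 1 = a ^ 2 → b ^ 2 + 5 * 1 ≠ f ^ 2) _ _ _ h1' h2'

theorem sq_ne_quartic_of_odd_of_odd {x y : ℤ} (hx : Odd x) (hy : Odd y) (z : ℤ) :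
    z ^ 2 ≠ x ^ 4 + 18 * x ^ 2 * y ^ 2 + y ^ 4 := by
  intro hz
  obtain ⟨i, hi⟩ := Int.exists_sq_eq_eight_mul_add_one_of_odd hx
  obtain ⟨j, hj⟩ := Int.exists_sq_eq_eight_mul_add_one_of_odd hy
  have h32 : z ^ 2 = 32 * (2 * i ^ 2 + 2 * j ^ 2 + 36 * i * j + 5 * i + 5 * j) + 20 := by
    rw [hz, show x ^ 4 = (x ^ 2) ^ 2 by ring, show y ^ 4 = (y ^ 2) ^ 2 by ring, hi, hj]; ring
  have h := congrArg (Int.cast : ℤ → ZMod 32) h32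
  push_cast at h
  simp only [show (32 : ZMod 32) = 0 from rfl, zero_mul, zero_add] at h
  exact (by decide : ∀ z : ZMod 32, z ^ 2 ≠ 20) _ h

theorem exists_sq_add_sq_and_sq_add_five_mul_sq_of_sq_eq_quartic {x y z : ℤ}
    (hxy : IsCoprime x y) (hx : x ≠ 0) (hy : y ≠ 0)
    (hz : z ^ 2 = x ^ 4 + 18 * x ^ 2 * y ^ 2 + y ^ 4) :
    ∃ b e a f : ℤ, e ≠ 0 ∧ 4 * e ^ 4 ≤ x ^ 2 + y ^ 2 ∧
      b ^ 2 + e ^ 2 = a ^ 2 ∧ b ^ 2 + 5 * e ^ 2 = f ^ 2 := by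
  wlog hxy_par : Odd x ∧ Even y generalizing x y
  · rcases Int.even_or_odd x with hx_par | hx_par <;>
      rcases Int.even_or_odd y with hy_par | hy_par
    · exact absurd (hxy.isUnit_of_dvd' hx_par.two_dvd hy_par.two_dvd)
        (by norm_num [Int.isUnit_iff])
    · simpa [add_comm] using this hxy.symm hy hx (by linear_combination hz) ⟨hy_par, hx_par⟩
    · exact absurd ⟨hx_par, hy_par⟩ hxy_par
    · exact absurd hz (sq_ne_quartic_of_odd_of_odd hx_par hy_par z)
  obtain ⟨m, n, hmn, hpar, hx2, hy2⟩ :=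
    exists_mul_eq_of_sq_eq_quartic hxy hxy_par.1 hxy_par.2 hz
  rcases hpar with ⟨hm, N, rfl⟩ | ⟨⟨M, rfl⟩, hn⟩
  · exact exists_sq_add_sq_and_sq_add_five_mul_sq
      (show IsCoprime m (2 * N) by rwa [two_mul]).of_mul_right_right hm hx hy
      (by linarith) (by linarith)
  · simpa [add_comm] using exists_sq_add_sq_and_sq_add_five_mul_sq
      (show IsCoprime n (2 * M) by rw [two_mul]; exact hmn.symm).of_mul_right_right.neg_right hn
      hy hx (by linarith) (by linarith)

theorem exists_sq_eq_quartic_of_sq_add_sq_of_sq_add_five_mul_sq {b e a f : ℤ} (he : e ≠ 0)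
    (h1 : b ^ 2 + e ^ 2 = a ^ 2) (h2 : b ^ 2 + 5 * e ^ 2 = f ^ 2) :
    ∃ m n w : ℤ, IsCoprime m n ∧ m ≠ 0 ∧ n ≠ 0 ∧ 2 * (m ^ 2 + n ^ 2) ≤ e ^ 2 ∧
      w ^ 2 = m ^ 4 + 18 * m ^ 2 * n ^ 2 + n ^ 4 := by
  obtain ⟨g, b, e, hg, hbe, rfl, rfl⟩ := Int.exists_gcd_one' (Int.gcd_pos_of_ne_zero_right b he)
  have hg0 : (g : ℤ) ≠ 0 := by exact_mod_cast hg.ne'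
  obtain ⟨a, ha⟩ := exists_eq_pow_of_pow_eq_pow_mul two_ne_zero hg0 (c := b ^ 2 + e ^ 2)
    (by rw [← h1]; ring)
  obtain ⟨f, hf⟩ := exists_eq_pow_of_pow_eq_pow_mul two_ne_zero hg0 (c := b ^ 2 + 5 * e ^ 2)
    (by rw [← h2]; ring)
  have he0 : e ≠ 0 := left_ne_zero_of_mul he
  have hb : Odd b := by
    refine Int.not_even_iff_odd.mp fun hb => ?_
    have he2 := even_of_sq_add_sq_eq_sq_of_sq_add_five_mul_sq_eq_sq ha hf
    exact absurd ((Int.isCoprime_iff_gcd_eq_one.mpr hbe).isUnit_of_dvd' hb.two_dvd he2.two_dvd)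
      (by norm_num [Int.isUnit_iff])
  have ha0 : a ≠ 0 := by
    rintro rfl
    have : 0 < e ^ 2 := by positivity
    nlinarith [sq_nonneg b]
  obtain ⟨m, n, rfl, rfl, -, hmn, -, -⟩ := PythagoreanTriple.coprime_classification'
    (z := |a|) (by unfold PythagoreanTriple; rw [abs_mul_abs_self]; linear_combination ha) hbe
    (Int.odd_iff.mp hb) (abs_pos.mpr ha0)
  have hm : m ≠ 0 := by rintro rfl; simp at he0
  have hn : n ≠ 0 := by rintro rfl; simp at he0
  refine ⟨m, n, f, Int.isCoprime_iff_gcd_eq_one.mpr hmn, hm, hn, ?_, by linear_combination -hf⟩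
  have hg1 : (1 : ℤ) ≤ (g : ℤ) ^ 2 := one_le_pow₀ (by exact_mod_cast hg)
  have hm1 : 1 ≤ m ^ 2 := (one_le_sq_iff_one_le_abs m).mpr (Int.one_le_abs hm)
  have hn1 : 1 ≤ n ^ 2 := (one_le_sq_iff_one_le_abs n).mpr (Int.one_le_abs hn)
  calc 2 * (m ^ 2 + n ^ 2) ≤ 4 * (m ^ 2 * n ^ 2) := by nlinarith
    _ ≤ 4 * (m ^ 2 * n ^ 2) * g ^ 2 := le_mul_of_one_le_right (by positivity) hg1
    _ = (2 * m * n * g) ^ 2 := by ring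

theorem sq_ne_quartic_of_isCoprime {x y : ℤ} (hxy : IsCoprime x y) (hx : x ≠ 0) (hy : y ≠ 0)
    (z : ℤ) : z ^ 2 ≠ x ^ 4 + 18 * x ^ 2 * y ^ 2 + y ^ 4 := by
  intro hz
  obtain ⟨b, e, a, f, he, hxy_e, h1, h2⟩ :=
    exists_sq_add_sq_and_sq_add_five_mul_sq_of_sq_eq_quartic hxy hx hy hz
  obtain ⟨m, n, w, hmn, hm, hn, hmn_e, hw⟩ :=
    exists_sq_eq_quartic_of_sq_add_sq_of_sq_add_five_mul_sq he h1 h2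
  exact sq_ne_quartic_of_isCoprime hmn hm hn w hw
termination_by (x ^ 2 + y ^ 2).toNat
decreasing_by
  have : 0 < e ^ 2 := by positivity
  refine (Int.toNat_lt_toNat (by positivity)).mpr ?_
  nlinarith

theorem sq_ne_quartic {x y : ℤ} (hx : x ≠ 0) (hy : y ≠ 0) (z : ℤ) :
    z ^ 2 ≠ x ^ 4 + 18 * x ^ 2 * y ^ 2 + y ^ 4 := by
  intro hz
  obtain ⟨g, x, y, hg, hxy, rfl, rfl⟩ := Int.exists_gcd_one' (Int.gcd_pos_of_ne_zero_left y hx)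
  have hg0 : (g : ℤ) ^ 2 ≠ 0 := pow_ne_zero 2 (by exact_mod_cast hg.ne')
  obtain ⟨w, hw⟩ := exists_eq_pow_of_pow_eq_pow_mul two_ne_zero hg0
    (c := x ^ 4 + 18 * x ^ 2 * y ^ 2 + y ^ 4) (by rw [hz]; ring)
  exact sq_ne_quartic_of_isCoprime (Int.isCoprime_iff_gcd_eq_one.mpr hxy)
    (left_ne_zero_of_mul hx) (left_ne_zero_of_mul hy) w hw.symm

/-- For all positive integers `s ≠ t`, the number
`s^8 + 68s^6t^2 - 122s^4t^4 + 68s^2t^6 + t^8` is not a perfect square.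
Consequently the two-parameter Saunderson family
`a = 6ts^5 - 20t^3s^3 + 6t^5s`, `b = -s^6 + 15t^2s^4 - 15t^4s^2 + t^6`,
`c = 8s^5t - 8st^5` contains no perfect Euler brick. -/
theorem saunderson_family_not_perfect (s t : ℤ) (hs : 0 < s) (ht : 0 < t)
    (hst : s ≠ t) :
    (¬ ∃ k : ℤ, s ^ 8 + 68 * s ^ 6 * t ^ 2 - 122 * s ^ 4 * t ^ 4 +
        68 * s ^ 2 * t ^ 6 + t ^ 8 = k ^ 2) ∧
    (¬ ∃ k : ℤ, (6 * t * s ^ 5 - 20 * t ^ 3 * s ^ 3 + 6 * t ^ 5 * s) ^ 2 +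
        (-s ^ 6 + 15 * t ^ 2 * s ^ 4 - 15 * t ^ 4 * s ^ 2 + t ^ 6) ^ 2 +
        (8 * s ^ 5 * t - 8 * s * t ^ 5) ^ 2 = k ^ 2) := by
  have hy : s ^ 2 - t ^ 2 ≠ 0 :=
    sub_ne_zero.mpr fun h => hst ((pow_left_inj₀ hs.le ht.le two_ne_zero).mp h)
  have octic_ne_sq (k : ℤ) :
      s ^ 8 + 68 * s ^ 6 * t ^ 2 - 122 * s ^ 4 * t ^ 4 + 68 * s ^ 2 * t ^ 6 + t ^ 8 ≠ k ^ 2 :=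
    fun hk => sq_ne_quartic (x := 2 * s * t) (by positivity) hy k (by rw [← hk]; ring)
  refine ⟨fun ⟨k, hk⟩ => octic_ne_sq k hk, fun ⟨k, hk⟩ => ?_⟩
  obtain ⟨k, hk⟩ := exists_eq_pow_of_pow_eq_pow_mul two_ne_zero (g := s ^ 2 + t ^ 2)
    (c := s ^ 8 + 68 * s ^ 6 * t ^ 2 - 122 * s ^ 4 * t ^ 4 + 68 * s ^ 2 * t ^ 6 + t ^ 8)
    (by positivity) (by rw [← hk]; ring)
  exact octic_ne_sq k hk
end
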